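/- State refinement preserves paths: let (A, stepA) be a transition system, s ∈ A a state refined into a nonempty set of new states N with map back : N → {s}, and suppose every edge (x, s) in stepA is replaced by edges (x, n) for all n ∈ N, and every edge (s, y) by edges (n, y) for all n ∈ N. Then for any path a →* b in the original system with a ≠ s and b ≠ s, there is a corresponding path a →* b in the refined system. -/

import Mathlib

/-!
Fix any `n ∈ N` and send `s` to `n`, every other state to itself. This map carries each
original edge to a refined edge, so it carries paths to paths, and it fixes both endpoints.
-/

def refinedStep {A : Type*} (stepA : A → A → Prop) (s : A) (N : Type*) :
    ({x : A // x ≠ s} ⊕ N) → ({x : A // x ≠ s} ⊕ N) → Prop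
  | .inl x, .inl y => stepA x.val y.val
  | .inl x, .inr _ => stepA x.val s
  | .inr _, .inl y => stepA s y.val
  | .inr _, .inr _ => stepA s s

section

variable {A : Type*} {N : Type*}

open Classical in
noncomputable def refineState (s : A) (n : N) (x : A) : {x : A // x ≠ s} ⊕ N :=
  if h : x = s then .inr n else .inl ⟨x, h⟩

theorem refineState_of_ne {s x : A} (n : N) (h : x ≠ s) :
    refineState s n x = .inl ⟨x, h⟩ := dif_neg h

theorem refinedStep_refineState {stepA : A → A → Prop} {s x y : A} (n : N)
    (hxy : stepA x y) :
    refinedStep stepA s N (refineState s n x) (refineState s n y) := by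
  unfold refineState
  split_ifs <;> subst_vars <;> exact hxy

theorem reflTransGen_refinedStep_refineState {stepA : A → A → Prop} {s x y : A} (n : N)
    (hxy : Relation.ReflTransGen stepA x y) :
    Relation.ReflTransGen (refinedStep stepA s N) (refineState s n x) (refineState s n y) :=
  hxy.lift (refineState s n) fun _ _ ↦ refinedStep_refineState n

end

theorem state_refinement_preserves_paths {A : Type*} (stepA : A → A → Prop) (s : A)
    (N : Type*) [Nonempty N] (a b : A) (ha : a ≠ s) (hb : b ≠ s)
    (hpath : Relation.ReflTransGen stepA a b) :
    Relation.ReflTransGen (refinedStep stepA s N)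
      (Sum.inl ⟨a, ha⟩) (Sum.inl ⟨b, hb⟩) := by
  obtain ⟨n⟩ := ‹Nonempty N›
  rw [← refineState_of_ne n ha, ← refineState_of_ne n hb]
  exact reflTransGen_refinedStep_refineState n hpath
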